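/- arXiv:2109.03850 — 5 statements merged into one kernel-verified Lean document; each statement's English description precedes it below -/
import Mathlib

section
/- Let Δ be a reducible root system of rank at least 3 in a Euclidean space, written as an orthogonal direct sum Δ = Δ₁ ⊕ Δ₂ with rank Δ₁ ≥ 2, and fix a set of simple roots Π. Then there exists a positive root λ (one can take λ a simple root of Δ₁) such that for every positive root μ there is a positive root ν with ⟨λ + μ, ν⟩ ≤ 0. -/
/-!
The simple roots lying in `Δ₁` span `Δ₁`, so `rank Δ₁ ≥ 2` provides two distinct simple roots
`λ, λ'` in `Δ₁`, and distinct simple roots make an obtuse angle. Take `λ`. A positive root `μ`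
of `Δ₁` is orthogonal to every positive root `ν` of `Δ₂`, so `⟨λ + μ, ν⟩ = 0`; a positive root `μ`
of `Δ₂` is orthogonal to `λ'`, so `⟨λ + μ, λ'⟩ = ⟨λ, λ'⟩ ≤ 0`.
-/

open RealInnerProductSpace Finset

def IsIndecomposable {V : Type*} [Add V] (P : Finset V) (α : V) : Prop :=
  α ∈ P ∧ ¬ ∃ β ∈ P, ∃ γ ∈ P, α = β + γ

theorem card_filter_lt_lt_of_mem {V : Type*} {P : Finset V} (f : V → ℝ) {α β : V} (hβ : β ∈ P)
    (hlt : f β < f α) : #(P.filter (f · < f β)) < #(P.filter (f · < f α)) := by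
  refine card_lt_card ((ssubset_iff_of_subset ?_).2 ⟨β, by simp [hβ, hlt], by simp⟩)
  intro x
  simp only [mem_filter]
  exact fun hx => ⟨hx.1, hx.2.trans hlt⟩

section Module

variable {V : Type*} [AddCommGroup V] [Module ℝ V]

theorem exists_pos_mem_of_neg_mem {s : Finset V} (hs : s.Nonempty) (hneg : ∀ α ∈ s, -α ∈ s)
    {f : V →ₗ[ℝ] ℝ} (hf : ∀ α ∈ s, f α ≠ 0) : ∃ α ∈ s, 0 < f α := by
  obtain ⟨α, hα⟩ := hs
  rcases (hf α hα).lt_or_gt with hlt | hgt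
  · exact ⟨-α, hneg α hα, by simpa using hlt⟩
  · exact ⟨α, hα, hgt⟩

theorem mem_closure_indecomposable {P : Finset V} {f : V →ₗ[ℝ] ℝ} (hf : ∀ α ∈ P, 0 < f α)
    {S : Set V} (hS : ∀ α ∈ S, ∀ β ∈ P, ∀ γ ∈ P, α = β + γ → β ∈ S ∧ γ ∈ S)
    {α : V} (hαP : α ∈ P) (hαS : α ∈ S) :
    α ∈ AddSubmonoid.closure (S ∩ {β | IsIndecomposable P β}) := by
  induction hn : #(P.filter (f · < f α)) using Nat.strong_induction_on generalizing α with
  | _ n ih =>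
  by_cases hind : IsIndecomposable P α
  · exact AddSubmonoid.subset_closure ⟨hαS, hind⟩
  obtain ⟨β, hβ, γ, hγ, rfl⟩ : ∃ β ∈ P, ∃ γ ∈ P, α = β + γ := by
    simpa [IsIndecomposable, hαP] using hind
  obtain ⟨hβS, hγS⟩ := hS _ hαS β hβ γ hγ rfl
  have hβlt : f β < f (β + γ) := by simpa using hf γ hγ
  have hγlt : f γ < f (β + γ) := by simpa using hf β hβ
  exact add_mem (ih _ (hn ▸ card_filter_lt_lt_of_mem f hβ hβlt) hβ hβS rfl)
    (ih _ (hn ▸ card_filter_lt_lt_of_mem f hγ hγlt) hγ hγS rfl)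

theorem span_le_span_indecomposable {Δ P : Finset V} {f : V →ₗ[ℝ] ℝ} (hf : ∀ α ∈ Δ, f α ≠ 0)
    (hP : ∀ α, α ∈ P ↔ α ∈ Δ ∧ 0 < f α) {S : Set V} (hSΔ : S ⊆ Δ) (hneg : ∀ α ∈ S, -α ∈ S)
    (hS : ∀ α ∈ S, ∀ β ∈ P, ∀ γ ∈ P, α = β + γ → β ∈ S ∧ γ ∈ S) :
    Submodule.span ℝ S ≤ Submodule.span ℝ (S ∩ {β | IsIndecomposable P β}) := by
  have hclosure {α : V} (hαS : α ∈ S) (hpos : 0 < f α) :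
      α ∈ Submodule.span ℝ (S ∩ {β | IsIndecomposable P β}) :=
    AddSubmonoid.closure_le.2 Submodule.subset_span
      (mem_closure_indecomposable (fun β hβ => ((hP β).1 hβ).2) hS ((hP α).2 ⟨hSΔ hαS, hpos⟩) hαS)
  refine Submodule.span_le.2 fun α hαS => ?_
  rcases (hf α (hSΔ hαS)).lt_or_gt with hlt | hgt
  · simpa using Submodule.neg_mem _ (hclosure (hneg α hαS) (by simpa using hlt))
  · exact hclosure hαS hgt

end Module

section InnerProduct

variable {V : Type*} [NormedAddCommGroup V] [InnerProductSpace ℝ V]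

theorem neg_mem_of_reflection_mem {Δ : Finset V}
    (hrefl : ∀ α ∈ Δ, ∀ β ∈ Δ, β - (2 * ⟪β, α⟫ / ⟪α, α⟫) • α ∈ Δ)
    {α : V} (hα : α ∈ Δ) (hα0 : α ≠ 0) : -α ∈ Δ := by
  have h := hrefl α hα α hα
  rwa [mul_div_assoc, div_self (real_inner_self_pos.2 hα0).ne', mul_one, two_smul,
    sub_add_cancel_left] at h

theorem sub_mem_of_inner_pos {Δ : Finset V}
    (hrefl : ∀ α ∈ Δ, ∀ β ∈ Δ, β - (2 * ⟪β, α⟫ / ⟪α, α⟫) • α ∈ Δ)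
    (hcrys : ∀ α ∈ Δ, ∀ β ∈ Δ, ∃ n : ℤ, 2 * ⟪β, α⟫ / ⟪α, α⟫ = (n : ℝ))
    {α β : V} (hα : α ∈ Δ) (hβ : β ∈ Δ) (hne : α ≠ β) (hpos : 0 < ⟪α, β⟫) : α - β ∈ Δ := by
  have hαα : 0 < ⟪α, α⟫ := real_inner_self_pos.2 (by rintro rfl; simp at hpos)
  have hββ : 0 < ⟪β, β⟫ := real_inner_self_pos.2 (by rintro rfl; simp at hpos)
  obtain ⟨n, hn⟩ := hcrys β hβ α hα
  obtain ⟨m, hm⟩ := hcrys α hα β hβ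
  rw [real_inner_comm] at hm
  have hn0 : 0 < n := Int.cast_pos.1 (by rw [← hn]; positivity)
  have hm0 : 0 < m := Int.cast_pos.1 (by rw [← hm]; positivity)
  rcases (show n = 1 ∨ 2 ≤ n by omega) with rfl | hn2
  · have h := hrefl β hβ α hα
    rwa [hn, Int.cast_one, one_smul] at h
  rcases (show m = 1 ∨ 2 ≤ m by omega) with rfl | hm2
  · have h := hrefl α hα β hβ
    rw [real_inner_comm, hm, Int.cast_one, one_smul] at h
    simpa using neg_mem_of_reflection_mem hrefl h (sub_ne_zero.2 hne.symm)
  -- Both Cartan integers are at least 2, which forces `‖α - β‖ = 0`.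
  have hβ_le : ⟪β, β⟫ ≤ ⟪α, β⟫ := by
    have : (2 : ℝ) ≤ 2 * ⟪α, β⟫ / ⟪β, β⟫ := by rw [hn]; exact_mod_cast hn2
    rw [le_div_iff₀ hββ] at this; linarith
  have hα_le : ⟪α, α⟫ ≤ ⟪α, β⟫ := by
    have : (2 : ℝ) ≤ 2 * ⟪α, β⟫ / ⟪α, α⟫ := by rw [hm]; exact_mod_cast hm2
    rw [le_div_iff₀ hαα] at this; linarith
  have hnorm : ‖α - β‖ ^ 2 ≤ 0 := by
    rw [norm_sub_sq_real, ← real_inner_self_eq_norm_sq, ← real_inner_self_eq_norm_sq]; linarith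
  exact (hne (sub_eq_zero.1 (norm_eq_zero.1 ((pow_eq_zero_iff two_ne_zero).1
    (hnorm.antisymm (sq_nonneg _)))))).elim

theorem inner_nonpos_of_isIndecomposable {Δ P : Finset V}
    (hrefl : ∀ α ∈ Δ, ∀ β ∈ Δ, β - (2 * ⟪β, α⟫ / ⟪α, α⟫) • α ∈ Δ)
    (hcrys : ∀ α ∈ Δ, ∀ β ∈ Δ, ∃ n : ℤ, 2 * ⟪β, α⟫ / ⟪α, α⟫ = (n : ℝ))
    {f : V →ₗ[ℝ] ℝ} (hf : ∀ α ∈ Δ, f α ≠ 0) (hP : ∀ α, α ∈ P ↔ α ∈ Δ ∧ 0 < f α)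
    {l l' : V} (hl : IsIndecomposable P l) (hl' : IsIndecomposable P l') (hne : l ≠ l') :
    ⟪l, l'⟫ ≤ 0 := by
  by_contra! hpos
  have hsub := sub_mem_of_inner_pos hrefl hcrys ((hP l).1 hl.1).1 ((hP l').1 hl'.1).1 hne hpos
  rcases (hf _ hsub).lt_or_gt with hlt | hgt
  · have hsub' : l' - l ∈ P := (hP _).2
      ⟨by simpa using neg_mem_of_reflection_mem hrefl hsub (sub_ne_zero.2 hne),
        by simpa using hlt⟩
    exact hl'.2 ⟨l' - l, hsub', l, hl.1, by abel⟩
  · exact hl.2 ⟨l - l', (hP _).2 ⟨hsub, hgt⟩, l', hl'.1, by abel⟩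

theorem mem_left_of_eq_add [DecidableEq V] {Δ₁ Δ₂ : Finset V} (h0 : (0 : V) ∉ Δ₁ ∪ Δ₂)
    (horth : ∀ α ∈ Δ₁, ∀ β ∈ Δ₂, ⟪α, β⟫ = 0) {α β γ : V} (hα : α ∈ Δ₁)
    (hβ : β ∈ Δ₁ ∪ Δ₂) (hγ : γ ∈ Δ₁ ∪ Δ₂) (h : α = β + γ) : β ∈ Δ₁ := by
  have hpos {x : V} (hx : x ∈ Δ₁ ∪ Δ₂) : 0 < ⟪x, x⟫ :=
    real_inner_self_pos.2 (ne_of_mem_of_not_mem hx h0)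
  refine (mem_union.1 hβ).resolve_right fun hβ₂ => ?_
  rcases mem_union.1 hγ with hγ₁ | hγ₂
  · have h' : ⟪α, β⟫ = ⟪β, β⟫ + ⟪γ, β⟫ := by rw [h, inner_add_left]
    linarith [horth α hα β hβ₂, horth γ hγ₁ β hβ₂, hpos hβ]
  · have h' : ⟪α, α⟫ = ⟪α, β⟫ + ⟪α, γ⟫ := by rw [← inner_add_right, ← h]
    linarith [horth α hα β hβ₂, horth α hα γ hγ₂, hpos (mem_union_left Δ₂ hα)]

theorem neg_mem_left [DecidableEq V] {Δ₁ Δ₂ : Finset V} (h0 : (0 : V) ∉ Δ₁ ∪ Δ₂)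
    (hrefl : ∀ α ∈ Δ₁ ∪ Δ₂, ∀ β ∈ Δ₁ ∪ Δ₂, β - (2 * ⟪β, α⟫ / ⟪α, α⟫) • α ∈ Δ₁ ∪ Δ₂)
    (horth : ∀ α ∈ Δ₁, ∀ β ∈ Δ₂, ⟪α, β⟫ = 0) {α : V} (hα : α ∈ Δ₁) : -α ∈ Δ₁ := by
  have hα0 : α ≠ 0 := ne_of_mem_of_not_mem (mem_union_left Δ₂ hα) h0
  refine (mem_union.1 (neg_mem_of_reflection_mem hrefl (mem_union_left Δ₂ hα) hα0)).resolve_right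
    fun h => hα0 ?_
  have := horth α hα _ h
  rwa [inner_neg_right, neg_eq_zero, inner_self_eq_zero] at this

theorem exists_ne_isIndecomposable_left [DecidableEq V] {Δ₁ Δ₂ P : Finset V}
    (hrefl : ∀ α ∈ Δ₁ ∪ Δ₂, ∀ β ∈ Δ₁ ∪ Δ₂, β - (2 * ⟪β, α⟫ / ⟪α, α⟫) • α ∈ Δ₁ ∪ Δ₂)
    (horth : ∀ α ∈ Δ₁, ∀ β ∈ Δ₂, ⟪α, β⟫ = 0)
    (hrank₁ : 2 ≤ Module.finrank ℝ (Submodule.span ℝ (Δ₁ : Set V)))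
    {f : V →ₗ[ℝ] ℝ} (hf : ∀ α ∈ Δ₁ ∪ Δ₂, f α ≠ 0) (hP : ∀ α, α ∈ P ↔ α ∈ Δ₁ ∪ Δ₂ ∧ 0 < f α) :
    ∃ l ∈ Δ₁, ∃ l' ∈ Δ₁, l ≠ l' ∧ IsIndecomposable P l ∧ IsIndecomposable P l' := by
  classical
  have h0 : (0 : V) ∉ Δ₁ ∪ Δ₂ := fun h => hf 0 h (map_zero f)
  have hmem {β} (hβ : β ∈ P) : β ∈ Δ₁ ∪ Δ₂ := ((hP β).1 hβ).1
  have hspan := span_le_span_indecomposable hf hP (S := Δ₁) (by simp)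
    (fun α hα => neg_mem_left h0 hrefl horth hα)
    (fun α hα β hβ γ hγ h => ⟨mem_left_of_eq_add h0 horth hα (hmem hβ) (hmem hγ) h,
      mem_left_of_eq_add h0 horth hα (hmem hγ) (hmem hβ) (h.trans (add_comm β γ))⟩)
  obtain ⟨l, hl, l', hl', hne⟩ := one_lt_card.1 <|
    calc 1 < Module.finrank ℝ (Submodule.span ℝ (Δ₁ : Set V)) := hrank₁
      _ ≤ _ := Submodule.finrank_mono (by simpa [Set.inter_def] using hspan)
      _ ≤ #(Δ₁.filter (IsIndecomposable P)) := finrank_span_finset_le_card _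
  rw [mem_filter] at hl hl'
  exact ⟨l, hl.1, l', hl'.1, hne, hl.2, hl'.2⟩

end InnerProduct

open RealInnerProductSpace Finset Classical in
theorem stmt1_general
    {V : Type*} [NormedAddCommGroup V] [InnerProductSpace ℝ V]
    (Δ Δ₁ Δ₂ : Finset V)
    (hunion : Δ = Δ₁ ∪ Δ₂)
    (hne₂ : Δ₂.Nonempty)
    (horth : ∀ α ∈ Δ₁, ∀ β ∈ Δ₂, ⟪α, β⟫ = 0)
    (hrefl : ∀ α ∈ Δ, ∀ β ∈ Δ, β - (2 * ⟪β, α⟫ / ⟪α, α⟫) • α ∈ Δ)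
    (hcrys : ∀ α ∈ Δ, ∀ β ∈ Δ, ∃ n : ℤ, 2 * ⟪β, α⟫ / ⟪α, α⟫ = (n : ℝ))
    (hrank₁ : 2 ≤ Module.finrank ℝ (Submodule.span ℝ (Δ₁ : Set V)))
    (f : V →ₗ[ℝ] ℝ) (hf : ∀ α ∈ Δ, f α ≠ 0)
    (Δp : Finset V) (hΔp : Δp = Δ.filter (fun α => 0 < f α))
    (Pi : Finset V)
    (hPi : Pi = Δp.filter (fun α => ¬ ∃ β ∈ Δp, ∃ γ ∈ Δp, α = β + γ)) :
    ∃ l ∈ Δp, l ∈ Pi ∧ l ∈ Δ₁ ∧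
      ∀ μ ∈ Δp, ∃ ν ∈ Δp, ⟪l + μ, ν⟫ ≤ 0 := by
  subst hunion
  have hP : ∀ α, α ∈ Δp ↔ α ∈ Δ₁ ∪ Δ₂ ∧ 0 < f α := by simp [hΔp]
  have horth' : ∀ α ∈ Δ₂, ∀ β ∈ Δ₁, ⟪α, β⟫ = 0 := fun α hα β hβ =>
    real_inner_comm α β ▸ horth β hβ α hα
  obtain ⟨l, hl₁, l', hl'₁, hne, hl, hl'⟩ :=
    exists_ne_isIndecomposable_left hrefl horth hrank₁ hf hP
  obtain ⟨ν, hν, hνpos⟩ := exists_pos_mem_of_neg_mem hne₂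
    (fun α hα => neg_mem_left (union_comm Δ₁ Δ₂ ▸ fun h => hf 0 h (map_zero f))
      (union_comm Δ₁ Δ₂ ▸ hrefl) horth' hα)
    (fun α hα => hf α (mem_union_right _ hα))
  refine ⟨l, hl.1, hPi ▸ mem_filter.2 hl, hl₁, fun μ hμ => ?_⟩
  rcases mem_union.1 ((hP μ).1 hμ).1 with hμ₁ | hμ₂
  · refine ⟨ν, (hP ν).2 ⟨mem_union_right _ hν, hνpos⟩, ?_⟩
    rw [inner_add_left, horth l hl₁ ν hν, horth μ hμ₁ ν hν, add_zero]
  · refine ⟨l', hl'.1, ?_⟩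
    rw [inner_add_left, horth' μ hμ₂ l' hl'₁, add_zero]
    exact inner_nonpos_of_isIndecomposable hrefl hcrys hf hP hl hl' hne

open RealInnerProductSpace Finset Classical in
/-- For a reducible crystallographic root system `Δ = Δ₁ ⊕ Δ₂` of rank ≥ 3
with `rank Δ₁ ≥ 2`, and simple roots `Π` (the positive roots that are not sums of two
positive roots), there is a positive root `λ`, which can be taken to be a simple root
belonging to `Δ₁`, such that for every positive root `μ` there is a positive root `ν`
with `⟨λ + μ, ν⟩ ≤ 0`. -/
theorem stmt1
    {V : Type*} [NormedAddCommGroup V] [InnerProductSpace ℝ V] [FiniteDimensional ℝ V]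
    (Δ Δ₁ Δ₂ : Finset V) (h0 : (0 : V) ∉ Δ)
    (hunion : Δ = Δ₁ ∪ Δ₂) (hdisj : Disjoint Δ₁ Δ₂)
    (hne₁ : Δ₁.Nonempty) (hne₂ : Δ₂.Nonempty)
    (horth : ∀ α ∈ Δ₁, ∀ β ∈ Δ₂, ⟪α, β⟫ = 0)
    (hrefl : ∀ α ∈ Δ, ∀ β ∈ Δ, β - (2 * ⟪β, α⟫ / ⟪α, α⟫) • α ∈ Δ)
    (hcrys : ∀ α ∈ Δ, ∀ β ∈ Δ, ∃ n : ℤ, 2 * ⟪β, α⟫ / ⟪α, α⟫ = (n : ℝ))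
    (hrank : 3 ≤ Module.finrank ℝ (Submodule.span ℝ (Δ : Set V)))
    (hrank₁ : 2 ≤ Module.finrank ℝ (Submodule.span ℝ (Δ₁ : Set V)))
    (f : V →ₗ[ℝ] ℝ) (hf : ∀ α ∈ Δ, f α ≠ 0)
    (Δp : Finset V) (hΔp : Δp = Δ.filter (fun α => 0 < f α))
    (Pi : Finset V)
    (hPi : Pi = Δp.filter (fun α => ¬ ∃ β ∈ Δp, ∃ γ ∈ Δp, α = β + γ)) :
    ∃ l ∈ Δp, l ∈ Pi ∧ l ∈ Δ₁ ∧
      ∀ μ ∈ Δp, ∃ ν ∈ Δp, ⟪l + μ, ν⟫ ≤ 0 :=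
  stmt1_general Δ Δ₁ Δ₂ hunion hne₂ horth hrefl hcrys hrank₁ f hf Δp hΔp Pi hPi
end

section
/- Let Δ be an irreducible (possibly non-reduced) root system of rank at least 3 in a Euclidean space, with positive system Δ⁺ and simple roots Π. Then there exists a positive root λ with maximal length, satisfying λ ∈ Π or λ/2 ∈ Π, such that for every positive root μ there exists a positive root ν with ⟨λ + μ, ν⟩ ≤ 0. -/
/-!
The indecomposable positive roots `Π` are pairwise obtuse and lie in the half-space `f > 0`,
so they are linearly independent, and every positive root is a nonnegative combination of
them. Hence reflecting a positive root `x` in a simple root `α` with `⟪x, α⟫ > 0` gives a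
positive root of the same length and smaller value of `f`, unless `x` is proportional to `α`.
A positive root `l` of maximal length and, among those, with minimal `f l` is therefore `δ` or
`2δ` for a simple root `δ`.

Irreducibility gives a simple root `γ` with `⟪δ, γ⟫ < 0`, and rank `≥ 3` a third simple root
`β`. For a positive root `μ`, either `ν = β` works, or `μ` is not a multiple of `γ`, and then
`ν = γ` works: otherwise the integrality of `⟨l, γ^∨⟩`, `⟨μ, γ^∨⟩` and `⟨γ, l^∨⟩` forces
`2⟪μ, γ⟫ ≥ ‖γ‖² + ‖l‖² ≥ ‖γ‖² + ‖μ‖²`, contradicting the strict Cauchy–Schwarz inequality.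
-/

open RealInnerProductSpace Finset

section

variable {V : Type*} [NormedAddCommGroup V] [InnerProductSpace ℝ V]

theorem real_inner_mul_inner_self_lt {x y : V} (hx : x ≠ 0) (h : ∀ t : ℝ, y ≠ t • x) :
    ⟪x, y⟫ * ⟪x, y⟫ < ⟪x, x⟫ * ⟪y, y⟫ := by
  refine (real_inner_mul_inner_self_le x y).lt_of_ne fun heq => h (⟪x, y⟫ / ⟪x, x⟫) ?_
  have hxx : 0 < ⟪x, x⟫ := real_inner_self_pos.mpr hx
  have hz : ⟪⟪x, x⟫ • y - ⟪x, y⟫ • x, ⟪x, x⟫ • y - ⟪x, y⟫ • x⟫ = 0 := by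
    simp only [inner_sub_left, inner_sub_right, real_inner_smul_left, real_inner_smul_right,
      real_inner_comm x y]
    linear_combination ⟪x, x⟫ * heq.symm
  rw [inner_self_eq_zero, sub_eq_zero] at hz
  rw [div_eq_inv_mul, mul_smul, ← hz, smul_smul, inv_mul_cancel₀ hxx.ne', one_smul]

/-- The Cartan integer `⟨β, α^∨⟩` (junk value `0` when `α = 0`). -/
noncomputable def cartan (β α : V) : ℝ := 2 * ⟪β, α⟫ / ⟪α, α⟫

theorem cartan_mul_inner_self {α : V} (hα : α ≠ 0) (β : V) :
    cartan β α * ⟪α, α⟫ = 2 * ⟪β, α⟫ :=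
  div_mul_cancel₀ _ (real_inner_self_pos.mpr hα).ne'

theorem cartan_self {α : V} (hα : α ≠ 0) : cartan α α = 2 := by
  rw [cartan, mul_div_assoc, div_self (real_inner_self_pos.mpr hα).ne', mul_one]

theorem cartan_pos_iff {α : V} (hα : α ≠ 0) {β : V} : 0 < cartan β α ↔ 0 < ⟪β, α⟫ := by
  rw [cartan, lt_div_iff₀ (real_inner_self_pos.mpr hα), zero_mul]
  constructor <;> intro h <;> linarith

theorem cartan_neg_iff {α : V} (hα : α ≠ 0) {β : V} : cartan β α < 0 ↔ ⟪β, α⟫ < 0 := by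
  rw [cartan, div_lt_iff₀ (real_inner_self_pos.mpr hα), zero_mul]
  constructor <;> intro h <;> linarith

theorem cartan_mul_cartan_lt_four {α β : V} (hα : α ≠ 0) (h : ∀ t : ℝ, β ≠ t • α) :
    cartan β α * cartan α β < 4 := by
  have hβ : β ≠ 0 := by simpa using h 0
  have hαα := real_inner_self_pos.mpr hα
  have hββ := real_inner_self_pos.mpr hβ
  rw [cartan, cartan, div_mul_div_comm, div_lt_iff₀ (mul_pos hαα hββ), real_inner_comm α β]
  nlinarith [real_inner_mul_inner_self_lt hα h]

/-- The reflection `s_α β`. -/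
noncomputable def reflect (α β : V) : V := β - cartan β α • α

theorem reflect_self {α : V} (hα : α ≠ 0) : reflect α α = -α := by
  rw [reflect, cartan_self hα, two_smul, sub_add_cancel_left]

theorem norm_reflect (α β : V) : ‖reflect α β‖ = ‖β‖ := by
  rcases eq_or_ne α 0 with rfl | hα
  · simp [reflect]
  rw [norm_eq_sqrt_real_inner, norm_eq_sqrt_real_inner]
  congr 1
  simp only [reflect, inner_sub_left, inner_sub_right, real_inner_smul_left,
    real_inner_smul_right, real_inner_comm β α]
  linear_combination cartan β α * cartan_mul_inner_self hα β

theorem inner_reflect_eq_neg (α β : V) : ⟪α, reflect α β⟫ = -⟪α, β⟫ := by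
  rcases eq_or_ne α 0 with rfl | hα
  · simp
  rw [reflect, inner_sub_right, real_inner_smul_right, cartan_mul_inner_self hα, real_inner_comm]
  ring

/-- A finite crystallographic root set, not necessarily reduced. -/
structure IsCrystallographicRootSet (Δ : Finset V) : Prop where
  zero_notMem : (0 : V) ∉ Δ
  reflect_mem : ∀ α ∈ Δ, ∀ β ∈ Δ, reflect α β ∈ Δ
  exists_int_cartan : ∀ α ∈ Δ, ∀ β ∈ Δ, ∃ n : ℤ, cartan β α = n

namespace IsCrystallographicRootSet

variable {Δ : Finset V} {α β : V}

theorem ne_zero (hΔ : IsCrystallographicRootSet Δ) (hα : α ∈ Δ) : α ≠ 0 :=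
  fun h => hΔ.zero_notMem (h ▸ hα)

theorem neg_mem (hΔ : IsCrystallographicRootSet Δ) (hα : α ∈ Δ) : -α ∈ Δ := by
  simpa [reflect_self (hΔ.ne_zero hα)] using hΔ.reflect_mem α hα α hα

theorem one_le_cartan (hΔ : IsCrystallographicRootSet Δ) (hα : α ∈ Δ) (hβ : β ∈ Δ)
    (h : 0 < ⟪β, α⟫) : 1 ≤ cartan β α := by
  obtain ⟨n, hn⟩ := hΔ.exists_int_cartan α hα β hβ
  have hpos := (cartan_pos_iff (hΔ.ne_zero hα)).mpr h
  rw [hn] at hpos ⊢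
  exact_mod_cast (show (0 : ℤ) < n by exact_mod_cast hpos)

theorem cartan_le_neg_one (hΔ : IsCrystallographicRootSet Δ) (hα : α ∈ Δ) (hβ : β ∈ Δ)
    (h : ⟪β, α⟫ < 0) : cartan β α ≤ -1 := by
  obtain ⟨n, hn⟩ := hΔ.exists_int_cartan α hα β hβ
  have hneg := (cartan_neg_iff (hΔ.ne_zero hα)).mpr h
  rw [hn] at hneg ⊢
  have hn0 : n < 0 := by exact_mod_cast hneg
  exact_mod_cast (show n ≤ -1 by omega)

theorem eq_half_or_one_or_two_of_smul_mem (hΔ : IsCrystallographicRootSet Δ) (hα : α ∈ Δ)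
    {t : ℝ} (ht : 0 < t) (htα : t • α ∈ Δ) : t = 1 / 2 ∨ t = 1 ∨ t = 2 := by
  have hα0 := hΔ.ne_zero hα
  obtain ⟨p, hp⟩ := hΔ.exists_int_cartan α hα _ htα
  obtain ⟨q, hq⟩ := hΔ.exists_int_cartan _ htα α hα
  have hαα := real_inner_self_pos.mpr hα0
  have hp' : (p : ℝ) = 2 * t := by
    rw [← hp, cartan, real_inner_smul_left]; field_simp
  have hq' : (q : ℝ) * t = 2 := by
    rw [← hq, cartan, real_inner_smul_right, real_inner_smul_left, real_inner_smul_right]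
    field_simp
  have hpq : p * q = 4 := by
    have : (p : ℝ) * q = 4 := by linear_combination 2 * hq' + (q : ℝ) * hp'
    exact_mod_cast this
  have hp0 : 0 < p := by exact_mod_cast (show (0 : ℝ) < p by linarith)
  have hp4 : p ≤ 4 := Int.le_of_dvd (by norm_num) ⟨q, hpq.symm⟩
  interval_cases p
  · left; norm_num at hp'; linarith
  · right; left; norm_num at hp'; linarith
  · omega
  · right; right; norm_num at hp'; linarith

theorem cartan_eq_one_or_of_inner_pos (hΔ : IsCrystallographicRootSet Δ) (hα : α ∈ Δ)
    (hβ : β ∈ Δ) (h : 0 < ⟪α, β⟫) (hprop : ∀ t : ℝ, β ≠ t • α) :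
    cartan α β = 1 ∨ cartan β α = 1 := by
  obtain ⟨p, hp⟩ := hΔ.exists_int_cartan β hβ α hα
  obtain ⟨q, hq⟩ := hΔ.exists_int_cartan α hα β hβ
  have hp1 : 1 ≤ p := by exact_mod_cast hp ▸ hΔ.one_le_cartan hβ hα h
  have hq1 : 1 ≤ q := by exact_mod_cast hq ▸ hΔ.one_le_cartan hα hβ (by rwa [real_inner_comm])
  have hqp : q * p < 4 := by
    exact_mod_cast hp ▸ hq ▸ cartan_mul_cartan_lt_four (hΔ.ne_zero hα) hprop
  rw [hp, hq]
  have : p = 1 ∨ q = 1 := by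
    by_contra! h
    nlinarith [show 2 ≤ p by omega, show 2 ≤ q by omega]
  exact_mod_cast this

theorem sub_mem_of_inner_pos (hΔ : IsCrystallographicRootSet Δ) (hα : α ∈ Δ) (hβ : β ∈ Δ)
    (h : 0 < ⟪α, β⟫) (hne : α ≠ β) : α - β ∈ Δ := by
  by_cases hprop : ∃ t : ℝ, β = t • α
  · obtain ⟨t, rfl⟩ := hprop
    have ht : 0 < t := by
      rw [real_inner_smul_right] at h
      exact pos_of_mul_pos_left h real_inner_self_nonneg
    rcases hΔ.eq_half_or_one_or_two_of_smul_mem hα ht hβ with rfl | rfl | rfl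
    · convert hβ using 1; module
    · exact absurd (one_smul ℝ α).symm hne
    · convert hΔ.neg_mem hα using 1; module
  push Not at hprop
  rcases hΔ.cartan_eq_one_or_of_inner_pos hα hβ h hprop with h1 | h1
  · simpa [reflect, h1] using hΔ.reflect_mem β hβ α hα
  · simpa [reflect, h1] using hΔ.neg_mem (hΔ.reflect_mem α hα β hβ)

theorem inner_add_nonpos_of_inner_neg (hΔ : IsCrystallographicRootSet Δ) {l μ γ : V}
    (hl : l ∈ Δ) (hμ : μ ∈ Δ) (hγ : γ ∈ Δ) (hμl : ‖μ‖ ≤ ‖l‖) (hlγ : ⟪l, γ⟫ < 0)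
    (hμγ : ∀ t : ℝ, μ ≠ t • γ) : ⟪l + μ, γ⟫ ≤ 0 := by
  by_contra! hpos
  have hγ0 := hΔ.ne_zero hγ
  have hγγ := real_inner_self_pos.mpr hγ0
  have hsum : 1 ≤ cartan l γ + cartan μ γ := by
    obtain ⟨m, hm⟩ := hΔ.exists_int_cartan γ hγ l hl
    obtain ⟨n, hn⟩ := hΔ.exists_int_cartan γ hγ μ hμ
    have h2 : 0 < cartan l γ + cartan μ γ := by
      rw [cartan, cartan, ← add_div, div_pos_iff_of_pos_right hγγ, ← mul_add, ← inner_add_left]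
      linarith
    rw [hm, hn] at h2 ⊢
    exact_mod_cast (show (0 : ℤ) < m + n by exact_mod_cast h2)
  have hγ_le : ⟪γ, γ⟫ ≤ 2 * ⟪l, γ⟫ + 2 * ⟪μ, γ⟫ := by
    linarith [le_mul_of_one_le_left hγγ.le hsum, cartan_mul_inner_self hγ0 l,
      cartan_mul_inner_self hγ0 μ]
  have hl_le : ⟪l, l⟫ ≤ -2 * ⟪l, γ⟫ := by
    linarith [mul_le_mul_of_nonneg_right (hΔ.cartan_le_neg_one hl hγ (by rwa [real_inner_comm]))
      (real_inner_self_nonneg (x := l)), cartan_mul_inner_self (hΔ.ne_zero hl) γ,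
      real_inner_comm l γ]
  have hμ_le : ⟪μ, μ⟫ ≤ ⟪l, l⟫ := by
    rw [real_inner_self_eq_norm_sq, real_inner_self_eq_norm_sq]; gcongr
  have hμγ_ge : ⟪γ, γ⟫ + ⟪μ, μ⟫ ≤ 2 * ⟪μ, γ⟫ := by linarith
  have hcs := real_inner_mul_inner_self_lt hγ0 hμγ
  rw [real_inner_comm μ γ] at hcs
  nlinarith [sq_nonneg (⟪γ, γ⟫ - ⟪μ, μ⟫),
    mul_self_le_mul_self (add_nonneg hγγ.le real_inner_self_nonneg) hμγ_ge]

end IsCrystallographicRootSet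

theorem nonpos_of_sum_smul_eq_zero_of_inner_nonpos {s : Finset V} (f : V →ₗ[ℝ] ℝ)
    (hf : ∀ v ∈ s, 0 < f v) (hs : ∀ u ∈ s, ∀ v ∈ s, u ≠ v → ⟪u, v⟫ ≤ 0) {c : V → ℝ}
    (hc : ∑ v ∈ s, c v • v = 0) : ∀ v ∈ s, c v ≤ 0 := by
  intro v hv
  by_contra! hcv
  set u := ∑ a ∈ s with 0 < c a, c a • a
  have hu : u = ∑ b ∈ s with ¬ 0 < c b, (-c b) • b := by
    rw [← sum_filter_add_sum_filter_not s (0 < c ·)] at hc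
    simp only [neg_smul, sum_neg_distrib]
    exact eq_neg_of_add_eq_zero_left hc
  have huu : ⟪u, u⟫ ≤ 0 := by
    conv_lhs => enter [2]; rw [hu]
    simp only [u, sum_inner, inner_sum, real_inner_smul_left, real_inner_smul_right]
    refine sum_nonpos fun a ha => sum_nonpos fun b hb => ?_
    rw [mem_filter] at ha hb
    have hba : ⟪b, a⟫ ≤ 0 := hs b hb.1 a ha.1 (by rintro rfl; exact hb.2 ha.2)
    have : 0 ≤ -c b := by linarith [not_lt.mp hb.2]
    nlinarith [mul_nonneg ha.2.le this]
  have hfu : f u = 0 := by rw [real_inner_self_nonpos.mp huu, map_zero]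
  have : 0 < f u := by
    simp only [u, map_sum, map_smul, smul_eq_mul]
    exact sum_pos (fun a ha => mul_pos (mem_filter.mp ha).2 (hf a (mem_filter.mp ha).1))
      ⟨v, mem_filter.mpr ⟨hv, hcv⟩⟩
  linarith

theorem linearIndepOn_of_inner_nonpos {s : Finset V} (f : V →ₗ[ℝ] ℝ) (hf : ∀ v ∈ s, 0 < f v)
    (hs : ∀ u ∈ s, ∀ v ∈ s, u ≠ v → ⟪u, v⟫ ≤ 0) : LinearIndepOn ℝ id (s : Set V) := by
  refine linearIndepOn_finset_iff.mpr fun c hc v hv => le_antisymm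
    (nonpos_of_sum_smul_eq_zero_of_inner_nonpos f hf hs hc v hv) ?_
  have hc' : ∑ v ∈ s, (-c) v • v = 0 := by
    simpa only [Pi.neg_apply, neg_smul, sum_neg_distrib, neg_eq_zero, id] using hc
  simpa using nonpos_of_sum_smul_eq_zero_of_inner_nonpos f hf hs hc' v hv

section PositiveSystem

variable {Δ : Finset V} {f : V →ₗ[ℝ] ℝ} {α β x : V}

-- `positiveRoots Δ f` and `simpleRoots Δ f` are the `Δ⁺` and `Π` cut out by the linear form `f`.

open Classical in
noncomputable def positiveRoots (Δ : Finset V) (f : V →ₗ[ℝ] ℝ) : Finset V :=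
  Δ.filter (fun α => 0 < f α)

open Classical in
noncomputable def simpleRoots (Δ : Finset V) (f : V →ₗ[ℝ] ℝ) : Finset V :=
  (positiveRoots Δ f).filter
    (fun α => ¬ ∃ β ∈ positiveRoots Δ f, ∃ γ ∈ positiveRoots Δ f, α = β + γ)

theorem mem_positiveRoots : x ∈ positiveRoots Δ f ↔ x ∈ Δ ∧ 0 < f x := mem_filter

open Classical in
theorem mem_simpleRoots : x ∈ simpleRoots Δ f ↔ x ∈ positiveRoots Δ f ∧
    ¬ ∃ β ∈ positiveRoots Δ f, ∃ γ ∈ positiveRoots Δ f, x = β + γ := mem_filter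

theorem simpleRoots_subset : simpleRoots Δ f ⊆ positiveRoots Δ f :=
  fun _ h => (mem_simpleRoots.mp h).1

theorem exists_nonneg_coeffs_of_mem_positiveRoots (hx : x ∈ positiveRoots Δ f) :
    ∃ c : V → ℝ, (∀ γ, 0 ≤ c γ) ∧ x = ∑ γ ∈ simpleRoots Δ f, c γ • γ := by
  classical
  by_contra hx'
  obtain ⟨x₀, hx₀, hmin⟩ := ((positiveRoots Δ f).filter fun y =>
    ¬ ∃ c : V → ℝ, (∀ γ, 0 ≤ c γ) ∧ y = ∑ γ ∈ simpleRoots Δ f, c γ • γ).exists_min_image f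
    ⟨x, mem_filter.mpr ⟨hx, hx'⟩⟩
  rw [mem_filter] at hx₀
  have below : ∀ y ∈ positiveRoots Δ f, f y < f x₀ →
      ∃ c : V → ℝ, (∀ γ, 0 ≤ c γ) ∧ y = ∑ γ ∈ simpleRoots Δ f, c γ • γ := fun y hy hlt => by
    by_contra h
    exact (hmin y (mem_filter.mpr ⟨hy, h⟩)).not_gt hlt
  apply hx₀.2
  by_cases hs : x₀ ∈ simpleRoots Δ f
  · refine ⟨fun γ => if γ = x₀ then 1 else 0, fun _ => ite_nonneg zero_le_one le_rfl, ?_⟩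
    simp [ite_smul, hs]
  obtain ⟨b, hb, c, hc, rfl⟩ : ∃ b ∈ positiveRoots Δ f, ∃ c ∈ positiveRoots Δ f, x₀ = b + c := by
    simpa [mem_simpleRoots, hx₀.1] using hs
  have hfb := (mem_positiveRoots.mp hb).2
  have hfc := (mem_positiveRoots.mp hc).2
  obtain ⟨cb, hcb, rfl⟩ := below b hb (by rw [map_add]; linarith)
  obtain ⟨cc, hcc, rfl⟩ := below c hc (by rw [map_add]; linarith)
  exact ⟨cb + cc, fun γ => add_nonneg (hcb γ) (hcc γ), by simp [add_smul, sum_add_distrib]⟩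

namespace IsCrystallographicRootSet

theorem mem_positiveRoots_or_neg_mem (hΔ : IsCrystallographicRootSet Δ)
    (hf : ∀ α ∈ Δ, f α ≠ 0) (hα : α ∈ Δ) :
    α ∈ positiveRoots Δ f ∨ -α ∈ positiveRoots Δ f := by
  simp only [mem_positiveRoots, map_neg, neg_pos]
  rcases (hf α hα).lt_or_gt with h | h
  · exact Or.inr ⟨hΔ.neg_mem hα, h⟩
  · exact Or.inl ⟨hα, h⟩

theorem inner_nonpos_of_mem_simpleRoots (hΔ : IsCrystallographicRootSet Δ)
    (hf : ∀ α ∈ Δ, f α ≠ 0) (hα : α ∈ simpleRoots Δ f) (hβ : β ∈ simpleRoots Δ f)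
    (hne : α ≠ β) : ⟪α, β⟫ ≤ 0 := by
  by_contra! h
  have hαp := simpleRoots_subset hα
  have hβp := simpleRoots_subset hβ
  rcases hΔ.mem_positiveRoots_or_neg_mem hf (hΔ.sub_mem_of_inner_pos
    (mem_positiveRoots.mp hαp).1 (mem_positiveRoots.mp hβp).1 h hne) with hd | hd
  · exact (mem_simpleRoots.mp hα).2 ⟨β, hβp, α - β, hd, by abel⟩
  · rw [neg_sub] at hd
    exact (mem_simpleRoots.mp hβ).2 ⟨α, hαp, β - α, hd, by abel⟩

theorem linearIndepOn_simpleRoots (hΔ : IsCrystallographicRootSet Δ)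
    (hf : ∀ α ∈ Δ, f α ≠ 0) : LinearIndepOn ℝ id (simpleRoots Δ f : Set V) :=
  linearIndepOn_of_inner_nonpos f (fun _ hv => (mem_positiveRoots.mp (simpleRoots_subset hv)).2)
    fun _ hu _ hv => hΔ.inner_nonpos_of_mem_simpleRoots hf hu hv

theorem reflect_mem_positiveRoots (hΔ : IsCrystallographicRootSet Δ)
    (hf : ∀ α ∈ Δ, f α ≠ 0) (hx : x ∈ positiveRoots Δ f) (hα : α ∈ simpleRoots Δ f)
    (hprop : ∀ t : ℝ, x ≠ t • α) : reflect α x ∈ positiveRoots Δ f := by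
  classical
  refine (hΔ.mem_positiveRoots_or_neg_mem hf (hΔ.reflect_mem α
    (mem_positiveRoots.mp (simpleRoots_subset hα)).1 x (mem_positiveRoots.mp hx).1)).resolve_right
    fun hneg => ?_
  obtain ⟨c, hc0, hxc⟩ := exists_nonneg_coeffs_of_mem_positiveRoots hx
  obtain ⟨d, hd0, hyd⟩ := exists_nonneg_coeffs_of_mem_positiveRoots hneg
  obtain ⟨β, hβ, hβα, hcβ⟩ : ∃ β ∈ simpleRoots Δ f, β ≠ α ∧ c β ≠ 0 := by
    by_contra! hc
    refine hprop (c α) ?_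
    rw [hxc, sum_eq_single_of_mem α hα fun γ hγ hne => by rw [hc γ hγ hne, zero_smul]]
  -- `x + (-s_α x)` is a multiple of `α`, yet it has a positive coefficient at `β ≠ α`.
  have hsum : ∑ γ ∈ simpleRoots Δ f, (c γ + d γ) • γ =
      ∑ γ ∈ simpleRoots Δ f, (if γ = α then cartan x α else 0) • γ := by
    simp only [add_smul, sum_add_distrib, ← hxc, ← hyd, ite_smul, zero_smul, sum_ite_eq', hα,
      if_true, reflect]
    abel
  have hβ0 := linearIndepOn_finset_iffₛ.mp (hΔ.linearIndepOn_simpleRoots hf) _ _ hsum β hβ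
  rw [if_neg hβα] at hβ0
  exact hcβ (le_antisymm (by linarith [hd0 β]) (hc0 β))

theorem exists_mem_simpleRoots_inner_pos (hΔ : IsCrystallographicRootSet Δ)
    (hx : x ∈ positiveRoots Δ f) : ∃ α ∈ simpleRoots Δ f, 0 < ⟪x, α⟫ := by
  by_contra! h
  obtain ⟨c, hc0, hxc⟩ := exists_nonneg_coeffs_of_mem_positiveRoots hx
  have hxx : ⟪x, x⟫ ≤ 0 := by
    calc ⟪x, x⟫ = ∑ γ ∈ simpleRoots Δ f, c γ * ⟪x, γ⟫ := by
          conv_lhs => arg 3; rw [hxc]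
          simp only [inner_sum, real_inner_smul_right]
      _ ≤ 0 := sum_nonpos fun γ hγ => mul_nonpos_of_nonneg_of_nonpos (hc0 γ) (h γ hγ)
  exact hΔ.ne_zero (mem_positiveRoots.mp hx).1 (real_inner_self_nonpos.mp hxx)

theorem span_le_span_simpleRoots (hΔ : IsCrystallographicRootSet Δ) (hf : ∀ α ∈ Δ, f α ≠ 0) :
    Submodule.span ℝ (Δ : Set V) ≤ Submodule.span ℝ (simpleRoots Δ f : Set V) := by
  have hpos : ∀ x ∈ positiveRoots Δ f, x ∈ Submodule.span ℝ (simpleRoots Δ f : Set V) := by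
    intro x hx
    obtain ⟨c, -, rfl⟩ := exists_nonneg_coeffs_of_mem_positiveRoots hx
    exact Submodule.sum_mem _ fun γ hγ => Submodule.smul_mem _ _ (Submodule.subset_span hγ)
  rw [Submodule.span_le]
  intro α hα
  rcases hΔ.mem_positiveRoots_or_neg_mem hf hα with h | h
  · exact hpos α h
  · simpa using Submodule.neg_mem _ (hpos _ h)

theorem exists_smul_of_inner_ne_zero (hΔ : IsCrystallographicRootSet Δ)
    (hf : ∀ α ∈ Δ, f α ≠ 0) {δ w : V} (hδ : δ ∈ simpleRoots Δ f)
    (hperp : ∀ γ ∈ simpleRoots Δ f, γ ≠ δ → ⟪δ, γ⟫ = 0) (hw : w ∈ positiveRoots Δ f)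
    (hwδ : ⟪δ, w⟫ ≠ 0) : ∃ t : ℝ, w = t • δ := by
  by_contra! hprop
  have hnonneg : ∀ y ∈ positiveRoots Δ f, 0 ≤ ⟪δ, y⟫ := by
    intro y hy
    obtain ⟨c, hc0, rfl⟩ := exists_nonneg_coeffs_of_mem_positiveRoots hy
    rw [inner_sum]
    refine sum_nonneg fun γ hγ => ?_
    rw [real_inner_smul_right]
    rcases eq_or_ne γ δ with rfl | hne
    · exact mul_nonneg (hc0 _) real_inner_self_nonneg
    · rw [hperp γ hγ hne, mul_zero]
  have h₁ := hnonneg w hw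
  have h₂ := hnonneg _ (hΔ.reflect_mem_positiveRoots hf hw hδ hprop)
  rw [inner_reflect_eq_neg] at h₂
  exact hwδ (by linarith)

open Classical in
theorem exists_mem_simpleRoots_inner_neg (hΔ : IsCrystallographicRootSet Δ)
    (hf : ∀ α ∈ Δ, f α ≠ 0)
    (hirr : ¬ ∃ Δ₁ Δ₂ : Finset V, Δ₁.Nonempty ∧ Δ₂.Nonempty ∧ Δ = Δ₁ ∪ Δ₂ ∧
      Disjoint Δ₁ Δ₂ ∧ ∀ α ∈ Δ₁, ∀ β ∈ Δ₂, ⟪α, β⟫ = 0)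
    {δ γ : V} (hδ : δ ∈ simpleRoots Δ f) (hγ : γ ∈ simpleRoots Δ f) (hγδ : γ ≠ δ) :
    ∃ γ ∈ simpleRoots Δ f, ⟪δ, γ⟫ < 0 := by
  by_contra! h
  have hperp : ∀ γ ∈ simpleRoots Δ f, γ ≠ δ → ⟪δ, γ⟫ = 0 := fun γ hγ hne =>
    le_antisymm (hΔ.inner_nonpos_of_mem_simpleRoots hf hδ hγ hne.symm) (h γ hγ)
  have hδΔ := (mem_positiveRoots.mp (simpleRoots_subset hδ)).1
  refine hirr ⟨Δ.filter (⟪δ, ·⟫ ≠ 0), Δ.filter (¬ ⟪δ, ·⟫ ≠ 0),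
    ⟨δ, mem_filter.mpr ⟨hδΔ, (real_inner_self_pos.mpr (hΔ.ne_zero hδΔ)).ne'⟩⟩,
    ⟨γ, mem_filter.mpr ⟨(mem_positiveRoots.mp (simpleRoots_subset hγ)).1,
      not_not.mpr (hperp γ hγ hγδ)⟩⟩,
    (filter_union_filter_not_eq _ _).symm, disjoint_filter_filter_not _ _ _, ?_⟩
  intro a ha b hb
  rw [mem_filter] at ha hb
  obtain ⟨t, rfl⟩ : ∃ t : ℝ, a = t • δ := by
    rcases hΔ.mem_positiveRoots_or_neg_mem hf ha.1 with hp | hn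
    · exact hΔ.exists_smul_of_inner_ne_zero hf hδ hperp hp ha.2
    · obtain ⟨t, ht⟩ := hΔ.exists_smul_of_inner_ne_zero hf hδ hperp hn
        (by rw [inner_neg_right]; exact neg_ne_zero.mpr ha.2)
      exact ⟨-t, by rw [neg_smul, ← ht, neg_neg]⟩
  rw [real_inner_smul_left, not_not.mp hb.2, mul_zero]

theorem mem_simpleRoots_or_half_smul_mem (hΔ : IsCrystallographicRootSet Δ)
    (hf : ∀ α ∈ Δ, f α ≠ 0) (hx : x ∈ positiveRoots Δ f)
    (hmin : ∀ y ∈ positiveRoots Δ f, ‖y‖ = ‖x‖ → f x ≤ f y) :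
    x ∈ simpleRoots Δ f ∨ (1 / 2 : ℝ) • x ∈ simpleRoots Δ f := by
  obtain ⟨α, hα, hxα⟩ := hΔ.exists_mem_simpleRoots_inner_pos hx
  have hαp := mem_positiveRoots.mp (simpleRoots_subset hα)
  by_cases hprop : ∃ t : ℝ, x = t • α
  · obtain ⟨t, rfl⟩ := hprop
    have ht : 0 < t := by
      have := (mem_positiveRoots.mp hx).2
      rw [map_smul, smul_eq_mul] at this
      exact pos_of_mul_pos_left this hαp.2.le
    rcases hΔ.eq_half_or_one_or_two_of_smul_mem hαp.1 ht (mem_positiveRoots.mp hx).1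
      with rfl | rfl | rfl
    · exact absurd ⟨_, hx, _, hx, by module⟩ (mem_simpleRoots.mp hα).2
    · rw [one_smul]; exact Or.inl hα
    · rw [smul_smul, one_div, inv_mul_cancel₀ two_ne_zero, one_smul]; exact Or.inr hα
  push Not at hprop
  -- Otherwise `s_α x` is a positive root of the same length and smaller value of `f`.
  have hle := hmin _ (hΔ.reflect_mem_positiveRoots hf hx hα hprop) (norm_reflect α x)
  have hc := hΔ.one_le_cartan hαp.1 (mem_positiveRoots.mp hx).1 hxα
  rw [reflect, map_sub, map_smul, smul_eq_mul] at hle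
  nlinarith [hαp.2]

theorem exists_inner_add_nonpos (hΔ : IsCrystallographicRootSet Δ) (hf : ∀ α ∈ Δ, f α ≠ 0)
    {l δ γ β μ : V} (hl : l ∈ positiveRoots Δ f) (hmax : ∀ y ∈ positiveRoots Δ f, ‖y‖ ≤ ‖l‖)
    {k : ℝ} (hk : 0 < k) (hlδ : l = k • δ) (hδ : δ ∈ simpleRoots Δ f)
    (hγ : γ ∈ simpleRoots Δ f) (hβ : β ∈ simpleRoots Δ f) (hβδ : β ≠ δ)
    (hβγ : β ≠ γ) (hδγ : ⟪δ, γ⟫ < 0) (hμ : μ ∈ positiveRoots Δ f) :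
    ∃ ν ∈ positiveRoots Δ f, ⟪l + μ, ν⟫ ≤ 0 := by
  by_cases hlμβ : ⟪l + μ, β⟫ ≤ 0
  · exact ⟨β, simpleRoots_subset hβ, hlμβ⟩
  have hγp := mem_positiveRoots.mp (simpleRoots_subset hγ)
  refine ⟨γ, simpleRoots_subset hγ, hΔ.inner_add_nonpos_of_inner_neg
    (mem_positiveRoots.mp hl).1 (mem_positiveRoots.mp hμ).1 hγp.1 (hmax μ hμ)
    (by rw [hlδ, real_inner_smul_left]; exact mul_neg_of_pos_of_neg hk hδγ) ?_⟩
  rintro t rfl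
  have ht : 0 < t := by
    have := (mem_positiveRoots.mp hμ).2
    rw [map_smul, smul_eq_mul] at this
    exact pos_of_mul_pos_left this hγp.2.le
  have hδβ := hΔ.inner_nonpos_of_mem_simpleRoots hf hδ hβ hβδ.symm
  have hγβ := hΔ.inner_nonpos_of_mem_simpleRoots hf hγ hβ hβγ.symm
  rw [hlδ, inner_add_left, real_inner_smul_left, real_inner_smul_left] at hlμβ
  nlinarith

end IsCrystallographicRootSet

end PositiveSystem

end

open RealInnerProductSpace Finset Classical in
theorem stmt2_general
    {V : Type*} [NormedAddCommGroup V] [InnerProductSpace ℝ V]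
    (Δ : Finset V) (h0 : (0 : V) ∉ Δ)
    (hrefl : ∀ α ∈ Δ, ∀ β ∈ Δ, β - (2 * ⟪β, α⟫ / ⟪α, α⟫) • α ∈ Δ)
    (hcrys : ∀ α ∈ Δ, ∀ β ∈ Δ, ∃ n : ℤ, 2 * ⟪β, α⟫ / ⟪α, α⟫ = (n : ℝ))
    (hirr : ¬ ∃ Δ₁ Δ₂ : Finset V, Δ₁.Nonempty ∧ Δ₂.Nonempty ∧ Δ = Δ₁ ∪ Δ₂ ∧
      Disjoint Δ₁ Δ₂ ∧ ∀ α ∈ Δ₁, ∀ β ∈ Δ₂, ⟪α, β⟫ = 0)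
    (hrank : 3 ≤ Module.finrank ℝ (Submodule.span ℝ (Δ : Set V)))
    (f : V →ₗ[ℝ] ℝ) (hf : ∀ α ∈ Δ, f α ≠ 0)
    (Δp : Finset V) (hΔp : Δp = Δ.filter (fun α => 0 < f α))
    (Pi : Finset V)
    (hPi : Pi = Δp.filter (fun α => ¬ ∃ β ∈ Δp, ∃ γ ∈ Δp, α = β + γ)) :
    ∃ l ∈ Δp, (∀ μ ∈ Δp, ‖μ‖ ≤ ‖l‖) ∧ (l ∈ Pi ∨ (1 / 2 : ℝ) • l ∈ Pi) ∧
      ∀ μ ∈ Δp, ∃ ν ∈ Δp, ⟪l + μ, ν⟫ ≤ 0 := by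
  have hΔ : IsCrystallographicRootSet Δ := ⟨h0, hrefl, hcrys⟩
  obtain rfl : Δp = positiveRoots Δ f := hΔp
  obtain rfl : Pi = simpleRoots Δ f := hPi
  have hcard : 3 ≤ #(simpleRoots Δ f) := hrank.trans <|
    (Submodule.finrank_mono (hΔ.span_le_span_simpleRoots hf)).trans
      (finrank_span_finset_le_card _)
  obtain ⟨lₘ, hlₘ, hlₘmax⟩ := (positiveRoots Δ f).exists_max_image (‖·‖)
    ((card_pos.mp (by omega)).mono simpleRoots_subset)
  obtain ⟨l, hl, hlmin⟩ := ((positiveRoots Δ f).filter (‖·‖ = ‖lₘ‖)).exists_min_image f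
    ⟨lₘ, mem_filter.mpr ⟨hlₘ, rfl⟩⟩
  rw [mem_filter] at hl
  have hmax : ∀ μ ∈ positiveRoots Δ f, ‖μ‖ ≤ ‖l‖ := hl.2 ▸ hlₘmax
  have hlsimple := hΔ.mem_simpleRoots_or_half_smul_mem hf hl.1
    fun y hy hyl => hlmin y (mem_filter.mpr ⟨hy, hyl.trans hl.2⟩)
  obtain ⟨δ, hδ, k, hk, hlδ⟩ : ∃ δ ∈ simpleRoots Δ f, ∃ k : ℝ, 0 < k ∧ l = k • δ := by
    rcases hlsimple with h | h
    · exact ⟨l, h, 1, one_pos, (one_smul ℝ l).symm⟩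
    · exact ⟨_, h, 2, two_pos, by rw [smul_smul]; norm_num⟩
  obtain ⟨γ₀, hγ₀, hγ₀δ⟩ := exists_mem_ne (s := simpleRoots Δ f) (by omega) δ
  obtain ⟨γ, hγ, hδγ⟩ := hΔ.exists_mem_simpleRoots_inner_neg hf hirr hδ hγ₀ hγ₀δ
  obtain ⟨β, hβ, hβγ⟩ := exists_mem_ne (s := (simpleRoots Δ f).erase δ)
    (by rw [card_erase_of_mem hδ]; omega) γ
  exact ⟨l, hl.1, hmax, hlsimple, fun μ hμ => hΔ.exists_inner_add_nonpos hf hl.1 hmax hk hlδ hδ hγ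
    (mem_erase.mp hβ).2 (mem_erase.mp hβ).1 hβγ hδγ hμ⟩

open RealInnerProductSpace Finset Classical in
/-- For an irreducible (possibly non-reduced) crystallographic root system
`Δ` of rank ≥ 3 with positive system `Δ⁺` and simple roots `Π`, there is a positive root
`λ` of maximal length, with `λ ∈ Π` or `λ/2 ∈ Π`, such that for every positive root `μ`
there exists a positive root `ν` with `⟨λ + μ, ν⟩ ≤ 0`. -/
theorem stmt2
    {V : Type*} [NormedAddCommGroup V] [InnerProductSpace ℝ V] [FiniteDimensional ℝ V]
    (Δ : Finset V) (h0 : (0 : V) ∉ Δ)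
    (hrefl : ∀ α ∈ Δ, ∀ β ∈ Δ, β - (2 * ⟪β, α⟫ / ⟪α, α⟫) • α ∈ Δ)
    (hcrys : ∀ α ∈ Δ, ∀ β ∈ Δ, ∃ n : ℤ, 2 * ⟪β, α⟫ / ⟪α, α⟫ = (n : ℝ))
    (hirr : ¬ ∃ Δ₁ Δ₂ : Finset V, Δ₁.Nonempty ∧ Δ₂.Nonempty ∧ Δ = Δ₁ ∪ Δ₂ ∧
      Disjoint Δ₁ Δ₂ ∧ ∀ α ∈ Δ₁, ∀ β ∈ Δ₂, ⟪α, β⟫ = 0)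
    (hrank : 3 ≤ Module.finrank ℝ (Submodule.span ℝ (Δ : Set V)))
    (f : V →ₗ[ℝ] ℝ) (hf : ∀ α ∈ Δ, f α ≠ 0)
    (Δp : Finset V) (hΔp : Δp = Δ.filter (fun α => 0 < f α))
    (Pi : Finset V)
    (hPi : Pi = Δp.filter (fun α => ¬ ∃ β ∈ Δp, ∃ γ ∈ Δp, α = β + γ)) :
    ∃ l ∈ Δp, (∀ μ ∈ Δp, ‖μ‖ ≤ ‖l‖) ∧ (l ∈ Pi ∨ (1 / 2 : ℝ) • l ∈ Pi) ∧
      ∀ μ ∈ Δp, ∃ ν ∈ Δp, ⟪l + μ, ν⟫ ≤ 0 :=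
  stmt2_general Δ h0 hrefl hcrys hirr hrank f hf Δp hΔp Pi hPi
end

section
/- With the shape operators 𝒮_ξ H = 0 (H ∈ 𝔟) and 𝒮_ξ X_λ = λ(ξ)X_λ (X_λ ∈ 𝔤_λ, λ ∈ Δ⁺), the mean curvature vector ℋ of S·o (determined by ⟨ℋ, ξ⟩ = tr 𝒮_ξ for all ξ ∈ 𝔟^⊥) equals the orthogonal projection of 2H_δ onto 𝔟^⊥, where H_δ = (1/2)∑_{λ∈Δ⁺} (dim 𝔤_λ) H_λ. In particular, S·o is minimal (ℋ = 0) if and only if H_δ ∈ 𝔟. -/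
/-! Both `ℋ` and the projection of `2 H_δ` onto `𝔟^⊥` lie in `𝔟^⊥` and have the same inner
products with every `ξ ∈ 𝔟^⊥`, because `⟨2 H_δ, ξ⟩ = ∑ dim 𝔤_λ · λ(ξ)` by the defining property of
the `H_λ`; so they coincide. The projection onto `𝔟^⊥` vanishes exactly on `𝔟^⊥⊥ = 𝔟`. -/

open RealInnerProductSpace Finset

theorem inner_sum_smul_of_inner_eq_apply {V ι : Type*} [NormedAddCommGroup V]
    [InnerProductSpace ℝ V] (s : Finset ι) (c : ι → ℝ) (f : ι → V →ₗ[ℝ] ℝ) (H : ι → V)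
    (hH : ∀ i x, ⟪H i, x⟫ = f i x) (x : V) :
    ⟪∑ i ∈ s, c i • H i, x⟫ = ∑ i ∈ s, c i * f i x := by
  simp only [sum_inner, real_inner_smul_left, hH]

namespace Submodule

variable {𝕜 E : Type*} [RCLike 𝕜] [NormedAddCommGroup E] [InnerProductSpace 𝕜 E]
  (K : Submodule 𝕜 E) [K.HasOrthogonalProjection]

theorem eq_starProjection_of_mem_of_inner_eq {u v : E} (hv : v ∈ K)
    (h : ∀ w ∈ K, inner 𝕜 v w = inner 𝕜 u w) : v = K.starProjection u :=
  (K.eq_starProjection_of_mem_of_inner_eq_zero hv fun w hw => by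
    rw [inner_sub_left, h w hw, sub_self]).symm

theorem orthogonalProjectionOnto_orthogonal_eq_zero_iff {v : E} :
    Kᗮ.orthogonalProjectionOnto v = 0 ↔ v ∈ K := by
  rw [orthogonalProjectionOnto_eq_zero_iff, orthogonal_orthogonal]

end Submodule

theorem stmt14_general
    {V : Type*} [NormedAddCommGroup V] [InnerProductSpace ℝ V] [FiniteDimensional ℝ V]
    (b : Submodule ℝ V)
    (Δp : Finset (V →ₗ[ℝ] ℝ)) (m : (V →ₗ[ℝ] ℝ) → ℕ)
    (Hv : (V →ₗ[ℝ] ℝ) → V) (hHv : ∀ (l : V →ₗ[ℝ] ℝ) (x : V), ⟪Hv l, x⟫ = l x)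
    (Hδ : V) (hHδ : Hδ = (1 / 2 : ℝ) • ∑ l ∈ Δp, (m l : ℝ) • Hv l)
    (ℋ : V) (hℋmem : ℋ ∈ bᗮ)
    (hℋ : ∀ ξ ∈ bᗮ, ⟪ℋ, ξ⟫ = ∑ l ∈ Δp, (m l : ℝ) * l ξ) :
    ℋ = (↑(Submodule.orthogonalProjectionOnto bᗮ ((2 : ℝ) • Hδ)) : V) ∧ (ℋ = 0 ↔ Hδ ∈ b) := by
  have h2Hδ : (2 : ℝ) • Hδ = ∑ l ∈ Δp, (m l : ℝ) • Hv l := by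
    rw [hHδ, smul_smul]
    norm_num
  have hinner : ∀ ξ ∈ bᗮ, ⟪ℋ, ξ⟫ = ⟪(2 : ℝ) • Hδ, ξ⟫ := fun ξ hξ => by
    rw [hℋ ξ hξ, h2Hδ, inner_sum_smul_of_inner_eq_apply Δp _ id Hv hHv]
    rfl
  have hproj : ℋ = (↑(bᗮ.orthogonalProjectionOnto ((2 : ℝ) • Hδ)) : V) :=
    bᗮ.eq_starProjection_of_mem_of_inner_eq hℋmem hinner
  refine ⟨hproj, ?_⟩
  rw [hproj, Submodule.coe_eq_zero, b.orthogonalProjectionOnto_orthogonal_eq_zero_iff,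
    b.smul_mem_iff two_ne_zero]

open RealInnerProductSpace Finset in
/-- With shape operators `𝒮_ξ H = 0` (`H ∈ 𝔟`) and `𝒮_ξ X_λ = λ(ξ) X_λ`
(`X_λ ∈ 𝔤_λ`), so that `tr 𝒮_ξ = ∑_{λ∈Δ⁺} dim 𝔤_λ · λ(ξ)`, the mean curvature vector `ℋ`
of `S·o` — the vector of `𝔟^⊥` determined by `⟨ℋ, ξ⟩ = tr 𝒮_ξ` for all `ξ ∈ 𝔟^⊥` — equals
the orthogonal projection of `2 H_δ` onto `𝔟^⊥`, where
`H_δ = (1/2) ∑_{λ∈Δ⁺} (dim 𝔤_λ) H_λ`. In particular `S·o` is minimal (`ℋ = 0`) iff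
`H_δ ∈ 𝔟`. -/
theorem stmt14
    {V : Type*} [NormedAddCommGroup V] [InnerProductSpace ℝ V] [FiniteDimensional ℝ V]
    (b : Submodule ℝ V)
    (Δp : Finset (V →ₗ[ℝ] ℝ)) (m : (V →ₗ[ℝ] ℝ) → ℕ) (hm : ∀ l ∈ Δp, 0 < m l)
    (Hv : (V →ₗ[ℝ] ℝ) → V) (hHv : ∀ (l : V →ₗ[ℝ] ℝ) (x : V), ⟪Hv l, x⟫ = l x)
    (Hδ : V) (hHδ : Hδ = (1 / 2 : ℝ) • ∑ l ∈ Δp, (m l : ℝ) • Hv l)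
    (ℋ : V) (hℋmem : ℋ ∈ bᗮ)
    (hℋ : ∀ ξ ∈ bᗮ, ⟪ℋ, ξ⟫ = ∑ l ∈ Δp, (m l : ℝ) * l ξ) :
    ℋ = (↑(Submodule.orthogonalProjectionOnto bᗮ ((2 : ℝ) • Hδ)) : V) ∧ (ℋ = 0 ↔ Hδ ∈ b) :=
  stmt14_general b Δp m Hv hHv Hδ hHδ ℋ hℋmem hℋ
end

section
/- Let Δ⁺ be a set of positive roots with root space dimensions m_λ = dim 𝔤_λ, and let 𝔟 ⊂ 𝔞 be a subspace with H_δ ∈ 𝔟 (where H_δ = (1/2)∑ m_λ H_λ). Suppose there exists λ₀ ∈ Δ⁺ such that H_{λ₀+μ} ∉ 𝔟 for every μ ∈ Δ⁺. Then there is NO permutation σ of the multiset {λ₁,…,λ_ℓ} (each root repeated m_λ times) satisfying (λ_i + σ(λ_i))|_{𝔟^⊥} = 0 for all i; i.e., the multiset of restricted roots to 𝔟^⊥ is not invariant under negation. -/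
open Finset Classical in
theorem stmt15_general
    {V : Type*} [NormedAddCommGroup V] [InnerProductSpace ℝ V]
    (Δp : Finset V) (m : V → ℕ) (hm : ∀ l ∈ Δp, 0 < m l)
    (b : Submodule ℝ V)
    (l₀ : V) (hl₀ : l₀ ∈ Δp) (hnon : ∀ μ ∈ Δp, l₀ + μ ∉ b)
    (ℓ : ℕ) (r : Fin ℓ → V) (hr : ∀ i, r i ∈ Δp)
    (hcount : ∀ l ∈ Δp, (univ.filter (fun i => r i = l)).card = m l) :
    ¬ ∃ σ : Equiv.Perm (Fin ℓ), ∀ i, r i + r (σ i) ∈ b := by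
  rintro ⟨σ, hσ⟩
  obtain ⟨i, -, rfl⟩ : ∃ i ∈ univ, r i = l₀ :=
    filter_nonempty_iff.mp (card_pos.mp (hcount l₀ hl₀ ▸ hm l₀ hl₀))
  exact hnon (r (σ i)) (hr _) (hσ i)

open Finset Classical in
/-- Let `Δ⁺` be positive roots (identified with vectors `H_λ` of a Euclidean
space `𝔞`) with multiplicities `m_λ = dim 𝔤_λ`, enumerated as `λ₁, …, λ_ℓ` with each root
repeated according to its multiplicity, and let `𝔟 ⊆ 𝔞` with `H_δ ∈ 𝔟`. If some `λ₀ ∈ Δ⁺`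
satisfies `H_{λ₀+μ} ∉ 𝔟` for every `μ ∈ Δ⁺` (note `(λ+μ)|_{𝔟^⊥} = 0 ↔ H_{λ+μ} ∈ 𝔟`),
then there is no permutation `σ` of `λ₁, …, λ_ℓ` with `(λ_i + σ(λ_i))|_{𝔟^⊥} = 0` for all
`i`; i.e. the multiset of restricted roots on `𝔟^⊥` is not invariant under negation. -/
theorem stmt15
    {V : Type*} [NormedAddCommGroup V] [InnerProductSpace ℝ V] [FiniteDimensional ℝ V]
    (Δp : Finset V) (m : V → ℕ) (hm : ∀ l ∈ Δp, 0 < m l)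
    (b : Submodule ℝ V)
    (Hδ : V) (hHδ : Hδ = (1 / 2 : ℝ) • ∑ l ∈ Δp, (m l : ℝ) • l) (hHδb : Hδ ∈ b)
    (l₀ : V) (hl₀ : l₀ ∈ Δp) (hnon : ∀ μ ∈ Δp, l₀ + μ ∉ b)
    (ℓ : ℕ) (r : Fin ℓ → V) (hr : ∀ i, r i ∈ Δp)
    (hcount : ∀ l ∈ Δp, (univ.filter (fun i => r i = l)).card = m l) :
    ¬ ∃ σ : Equiv.Perm (Fin ℓ), ∀ i, r i + r (σ i) ∈ b :=
  stmt15_general Δp m hm b l₀ hl₀ hnon ℓ r hr hcount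
end

section
/- Let P be a connected submanifold of ℝ^d and suppose that for every p ∈ P the translated submanifold P − p (translating p to the origin) has the same normal space at the origin as P does at its base point 0 ∈ P. Then P is an open subset of an affine subspace of ℝ^d. -/
/-! Let `T` be the common image of the differentials of `f`. The orthogonal projection onto `Tᗮ`
kills every differential of `f`, so composed with `f` it is locally constant, hence constant on the
connected `M`; since `f x₀ = 0`, `f` takes values in `T`. The orthogonal projection onto `T` then
agrees with `f` and has bijective differential everywhere, so by the inverse function theorem in
charts it is an open map into `T`. -/

open Filter Topology
open scoped Manifold

theorem Submodule.bijective_orthogonalProjectionOnto_comp {𝕜 E F : Type*} [RCLike 𝕜]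
    [AddCommGroup E] [Module 𝕜 E] [TopologicalSpace E] [NormedAddCommGroup F]
    [InnerProductSpace 𝕜 F] {L : E →L[𝕜] F} (hL : Function.Injective L) {K : Submodule 𝕜 F}
    [K.HasOrthogonalProjection] (hK : LinearMap.range L.toLinearMap = K) :
    Function.Bijective (K.orthogonalProjectionOnto ∘L L) := by
  have hLK : ∀ v, L v ∈ K := fun v => hK ▸ LinearMap.mem_range_self _ v
  have hcomp : ⇑(K.orthogonalProjectionOnto ∘L L) = fun v => ⟨L v, hLK v⟩ :=
    funext fun v => K.orthogonalProjectionOnto_mem_subspace_eq_self ⟨L v, hLK v⟩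
  rw [hcomp]
  refine ⟨fun u w huw => hL (congrArg Subtype.val huw), ?_⟩
  rintro ⟨t, ht⟩
  obtain ⟨v, rfl⟩ := hK.ge ht
  exact ⟨v, rfl⟩

section

variable {E : Type*} [NormedAddCommGroup E] [NormedSpace ℝ E]
  {H : Type*} [TopologicalSpace H] {I : ModelWithCorners ℝ E H} [I.Boundaryless]
  {M : Type*} [TopologicalSpace M] [ChartedSpace H M]
  {F : Type*} [NormedAddCommGroup F] [NormedSpace ℝ F]

theorem isLocallyConstant_of_mfderiv_eq_zero [IsManifold I 1 M] {g : M → F}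
    (hg : MDifferentiable I 𝓘(ℝ, F) g) (hg' : ∀ x, mfderiv I 𝓘(ℝ, F) g x = 0) :
    IsLocallyConstant g := by
  refine (IsLocallyConstant.iff_eventually_eq g).2 fun x => ?_
  set e := extChartAt I x
  have hderiv : ∀ q ∈ e.target, HasFDerivAt (g ∘ e.symm) (0 : E →L[ℝ] F) q := by
    intro q hq
    have hsymm : MDifferentiableAt 𝓘(ℝ, E) I e.symm q := by
      have := mdifferentiableWithinAt_extChartAt_symm hq
      rwa [I.range_eq_univ, mdifferentiableWithinAt_univ] at this
    have := ((hg (e.symm q)).hasMFDerivAt.comp q hsymm.hasMFDerivAt).hasFDerivAt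
    rwa [hg', ContinuousLinearMap.zero_comp] at this
  obtain ⟨ε, hε, hball⟩ := Metric.isOpen_iff.1 (isOpen_extChartAt_target x) (e x)
    (mem_extChartAt_target x)
  have hconst : ∀ q ∈ Metric.ball (e x) ε, g (e.symm q) = g (e.symm (e x)) := fun q hq =>
    Metric.isOpen_ball.is_const_of_fderiv_eq_zero (convex_ball _ _).isPreconnected
      (fun p hp => (hderiv p (hball hp)).differentiableAt.differentiableWithinAt)
      (fun p hp => (hderiv p (hball hp)).fderiv) hq (Metric.mem_ball_self hε)
  filter_upwards [extChartAt_source_mem_nhds (I := I) x,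
    (continuousAt_extChartAt (I := I) x).preimage_mem_nhds (Metric.ball_mem_nhds _ hε)]
    with y hy hyε
  rw [← e.left_inv hy, ← e.left_inv (mem_extChartAt_source x)]
  exact hconst _ hyε

theorem ContMDiffAt.hasStrictFDerivAt_comp_extChartAt_symm {n : WithTop ℕ∞} {g : M → F} {x : M}
    (hg : ContMDiffAt I 𝓘(ℝ, F) n g x) (hn : n ≠ 0) :
    HasStrictFDerivAt (g ∘ (extChartAt I x).symm) (mfderiv I 𝓘(ℝ, F) g x : E →L[ℝ] F)
      (extChartAt I x x) := by
  have hcd := (contMDiffAt_iff.1 hg).2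
  rw [I.range_eq_univ, contDiffWithinAt_univ] at hcd
  rw [(hg.mdifferentiableAt hn).mfderiv, I.range_eq_univ, fderivWithin_univ]
  have h := hcd.hasStrictFDerivAt hn
  simp only [extChartAt_model_space_eq_id, PartialEquiv.refl_coe, Function.id_comp] at h
  exact h

theorem isLocallyConstant_comp_of_range_mfderiv_le_ker [IsManifold I 1 M] {G : Type*}
    [NormedAddCommGroup G] [NormedSpace ℝ G] {f : M → F} (hf : MDifferentiable I 𝓘(ℝ, F) f)
    (φ : F →L[ℝ] G) (hφ : ∀ x, LinearMap.range (mfderiv I 𝓘(ℝ, F) f x).toLinearMap ≤ φ.ker) :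
    IsLocallyConstant (φ ∘ f) := by
  refine isLocallyConstant_of_mfderiv_eq_zero (φ.mdifferentiable.comp hf) fun x => ?_
  rw [mfderiv_comp x φ.mdifferentiableAt (hf x), φ.mfderiv_eq]
  exact ContinuousLinearMap.ext fun v => hφ x ⟨v, rfl⟩

theorem sub_mem_of_range_mfderiv_le {F : Type*} [NormedAddCommGroup F] [InnerProductSpace ℝ F]
    [IsManifold I 1 M] [PreconnectedSpace M] {f : M → F} (hf : MDifferentiable I 𝓘(ℝ, F) f)
    (K : Submodule ℝ F) [K.HasOrthogonalProjection]
    (hK : ∀ x, LinearMap.range (mfderiv I 𝓘(ℝ, F) f x).toLinearMap ≤ K) (x y : M) :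
    f x - f y ∈ K := by
  have hker : Kᗮ.orthogonalProjectionOnto.ker = K :=
    Kᗮ.ker_orthogonalProjectionOnto.trans K.orthogonal_orthogonal
  have hconst := (isLocallyConstant_comp_of_range_mfderiv_le_ker hf Kᗮ.orthogonalProjectionOnto
    fun z => (hK z).trans hker.ge).apply_eq_of_preconnectedSpace x y
  rw [← hker, LinearMap.mem_ker, map_sub]
  exact sub_eq_zero.2 hconst

theorem isOpenMap_of_bijective_mfderiv [CompleteSpace E] {G : Type*} [NormedAddCommGroup G]
    [NormedSpace ℝ G] [CompleteSpace G] {n : WithTop ℕ∞} {g : M → G}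
    (hg : ContMDiff I 𝓘(ℝ, G) n g) (hn : n ≠ 0)
    (hbij : ∀ x, Function.Bijective (mfderiv I 𝓘(ℝ, G) g x)) : IsOpenMap g := by
  refine IsOpenMap.of_nhds_le fun x => ?_
  let L : E ≃L[ℝ] G := ContinuousLinearEquiv.ofBijective (mfderiv I 𝓘(ℝ, G) g x : E →L[ℝ] G)
    (LinearMap.ker_eq_bot.2 (hbij x).1) (LinearMap.range_eq_top.2 (hbij x).2)
  have hL : HasStrictFDerivAt (g ∘ (extChartAt I x).symm) (L : E →L[ℝ] G) (extChartAt I x x) :=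
    (hg x).hasStrictFDerivAt_comp_extChartAt_symm hn
  have hsymm := (continuousAt_extChartAt_symm (I := I) x).tendsto
  rw [extChartAt_to_inv] at hsymm
  calc 𝓝 (g x) = map (g ∘ (extChartAt I x).symm) (𝓝 (extChartAt I x x)) := by
        rw [hL.map_nhds_eq_of_equiv, Function.comp_apply, extChartAt_to_inv]
    _ = map g (map (extChartAt I x).symm (𝓝 (extChartAt I x x))) := (map_map).symm
    _ ≤ map g (𝓝 x) := map_mono hsymm

theorem isOpen_preimage_range_of_range_mfderiv_eq [CompleteSpace E] {F : Type*}
    [NormedAddCommGroup F] [InnerProductSpace ℝ F] (K : Submodule ℝ F) [CompleteSpace K]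
    {n : WithTop ℕ∞} {f : M → F} (hf : ContMDiff I 𝓘(ℝ, F) n f) (hn : n ≠ 0)
    (hinj : ∀ x, Function.Injective (mfderiv I 𝓘(ℝ, F) f x))
    (hK : ∀ x, LinearMap.range (mfderiv I 𝓘(ℝ, F) f x).toLinearMap = K)
    (hmem : ∀ x, f x ∈ K) :
    IsOpen (Subtype.val ⁻¹' Set.range f : Set K) := by
  have hopen : IsOpenMap (K.orthogonalProjectionOnto ∘ f) :=
    isOpenMap_of_bijective_mfderiv (K.orthogonalProjectionOnto.contMDiff.comp hf) hn fun x => by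
      rw [mfderiv_comp x K.orthogonalProjectionOnto.mdifferentiableAt (hf.mdifferentiableAt hn),
        ContinuousLinearMap.mfderiv_eq]
      -- without `F := F`, unification picks the unnormed `TangentSpace 𝓘(ℝ, F) (f x)` for `F`
      exact Submodule.bijective_orthogonalProjectionOnto_comp (F := F) (hinj x) (hK x)
  have hπf : K.orthogonalProjectionOnto ∘ f = fun x => ⟨f x, hmem x⟩ :=
    funext fun x => K.orthogonalProjectionOnto_mem_subspace_eq_self ⟨f x, hmem x⟩
  have hpre : Subtype.val ⁻¹' Set.range f = Set.range (K.orthogonalProjectionOnto ∘ f) := by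
    ext ⟨v, hv⟩
    simp [hπf, Subtype.ext_iff]
  exact hpre ▸ hopen.isOpen_range

end

open scoped Manifold in
theorem stmt18_general
    {d m : ℕ} {M : Type*} [TopologicalSpace M]
    [ChartedSpace (EuclideanSpace ℝ (Fin m)) M]
    [IsManifold (𝓡 m) (⊤ : ℕ∞) M] [ConnectedSpace M]
    (f : M → EuclideanSpace ℝ (Fin d))
    (hf : ContMDiff (𝓡 m) 𝓘(ℝ, EuclideanSpace ℝ (Fin d)) (⊤ : ℕ∞) f)
    (himm : ∀ x : M, Function.Injective (mfderiv (𝓡 m) 𝓘(ℝ, EuclideanSpace ℝ (Fin d)) f x))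
    (x₀ : M) (hx₀ : f x₀ = 0)
    (hnormal : ∀ x : M,
      LinearMap.range (mfderiv (𝓡 m) 𝓘(ℝ, EuclideanSpace ℝ (Fin d)) f x).toLinearMap
        = LinearMap.range (mfderiv (𝓡 m) 𝓘(ℝ, EuclideanSpace ℝ (Fin d)) f x₀).toLinearMap) :
    Set.range f ⊆
      (LinearMap.range (mfderiv (𝓡 m) 𝓘(ℝ, EuclideanSpace ℝ (Fin d)) f x₀).toLinearMap :
        Submodule ℝ (EuclideanSpace ℝ (Fin d))) ∧
    IsOpen (Subtype.val ⁻¹' Set.range f :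
      Set (LinearMap.range (mfderiv (𝓡 m) 𝓘(ℝ, EuclideanSpace ℝ (Fin d)) f x₀).toLinearMap)) := by
  set T : Submodule ℝ (EuclideanSpace ℝ (Fin d)) :=
    LinearMap.range (mfderiv (𝓡 m) 𝓘(ℝ, EuclideanSpace ℝ (Fin d)) f x₀).toLinearMap
  have hmem : ∀ y, f y ∈ T := fun y => by
    simpa only [hx₀, sub_zero] using sub_mem_of_range_mfderiv_le (hf.mdifferentiable (by simp)) T
      (fun x => (hnormal x).le) y x₀
  exact ⟨Set.range_subset_iff.2 hmem,
    isOpen_preimage_range_of_range_mfderiv_eq T hf (by simp) himm hnormal hmem⟩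

open scoped Manifold in
/-- Let `P ⊆ ℝ^d` be a connected embedded smooth submanifold with `0 ∈ P`
(realized as the image of a smooth embedding `f : M → ℝ^d` of injective differential from
a connected `m`-manifold, with `f x₀ = 0`). If for every `p ∈ P` the translate `P − p`
has the same normal space at the origin as `P` does at `0` — equivalently, all tangent
spaces `range (df_x)` coincide with `T := range (df_{x₀})` — then `P` is an open subset
of an affine subspace of `ℝ^d` (namely of the linear subspace `T` through `0`). -/
theorem stmt18
    {d m : ℕ} {M : Type*} [TopologicalSpace M]
    [ChartedSpace (EuclideanSpace ℝ (Fin m)) M]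
    [IsManifold (𝓡 m) (⊤ : ℕ∞) M] [ConnectedSpace M]
    (f : M → EuclideanSpace ℝ (Fin d))
    (hf : ContMDiff (𝓡 m) 𝓘(ℝ, EuclideanSpace ℝ (Fin d)) (⊤ : ℕ∞) f)
    (hemb : Topology.IsEmbedding f)
    (himm : ∀ x : M, Function.Injective (mfderiv (𝓡 m) 𝓘(ℝ, EuclideanSpace ℝ (Fin d)) f x))
    (x₀ : M) (hx₀ : f x₀ = 0)
    (hnormal : ∀ x : M,
      LinearMap.range (mfderiv (𝓡 m) 𝓘(ℝ, EuclideanSpace ℝ (Fin d)) f x).toLinearMap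
        = LinearMap.range (mfderiv (𝓡 m) 𝓘(ℝ, EuclideanSpace ℝ (Fin d)) f x₀).toLinearMap) :
    Set.range f ⊆
      (LinearMap.range (mfderiv (𝓡 m) 𝓘(ℝ, EuclideanSpace ℝ (Fin d)) f x₀).toLinearMap :
        Submodule ℝ (EuclideanSpace ℝ (Fin d))) ∧
    IsOpen (Subtype.val ⁻¹' Set.range f :
      Set (LinearMap.range (mfderiv (𝓡 m) 𝓘(ℝ, EuclideanSpace ℝ (Fin d)) f x₀).toLinearMap)) :=
  stmt18_general f hf himm x₀ hx₀ hnormal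
end
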